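/- For every real number k ≥ 4, m_D((x+1)(y+1)+kz) = 9/(8k²) − 1/2 + log(k). -/

import Mathlib

open MeasureTheory Real

/-- The closed unit disk in the complex plane. -/
def unitDisk : Set ℂ := {z : ℂ | ‖z‖ ≤ 1}

/-- The areal (logarithmic) Mahler measure of `(x+1)(y+1) + kz`. -/
noncomputable def arealMahlerQk (k : ℝ) : ℝ :=
  (1 / π ^ 3) *
    ∫ x in unitDisk, ∫ y in unitDisk, ∫ z in unitDisk,
      Real.log ‖(x + 1) * (y + 1) + (k : ℂ) * z‖

/-!
In polar coordinates an integral over a disk becomes a radial integral of circle averages.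
By Jensen's formula the average of `log ‖w + k z‖` over `‖z‖ = r` is `log (max (k r) ‖w‖)`,
so for `‖w‖ ≤ k` integrating over the unit disk in `z` gives
`π log k + π (‖w‖² / k² - 1) / 2`. Since `‖(x + 1) (y + 1)‖ ≤ 4 ≤ k`, this applies to
`w = (x + 1) (y + 1)`, and what is left is a quadratic in `‖x + 1‖` and `‖y + 1‖`; its circle
averages are `r² + 1`, because `Re z` averages to zero on every circle about the origin.
-/

open Metric Set

theorem abs_log_le_mul_rpow_neg_half {t R : ℝ} (ht : 0 ≤ t) (htR : t ≤ R) :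
    |log t| ≤ 2 * (1 + R) * t ^ (-(1 / 2 : ℝ)) := by
  rcases ht.eq_or_lt with rfl | ht
  · simp
  have hsqrt : t ^ (1 / 2 : ℝ) * t ^ (-(1 / 2 : ℝ)) = 1 := by
    rw [← rpow_add ht]; norm_num
  rcases le_or_gt t 1 with ht1 | ht1
  · have h := abs_log_mul_self_rpow_lt t (1 / 2) ht ht1 (by norm_num)
    rw [abs_mul, abs_of_pos (rpow_pos_of_pos ht _)] at h
    calc |log t| = |log t| * t ^ (1 / 2 : ℝ) * t ^ (-(1 / 2 : ℝ)) := by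
          rw [mul_assoc, hsqrt, mul_one]
      _ ≤ 2 * t ^ (-(1 / 2 : ℝ)) := by gcongr; linarith
      _ ≤ 2 * (1 + R) * t ^ (-(1 / 2 : ℝ)) := by gcongr; linarith
  · have h := log_le_rpow_div ht.le (by norm_num : (0 : ℝ) < 1 / 2)
    have ht' : t ^ (1 / 2 : ℝ) = t * t ^ (-(1 / 2 : ℝ)) := by
      rw [← rpow_one_add' ht.le (by norm_num)]; norm_num
    rw [abs_of_pos (log_pos ht1)]
    calc log t ≤ 2 * t * t ^ (-(1 / 2 : ℝ)) := by rw [mul_assoc, ← ht']; linarith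
      _ ≤ 2 * (1 + R) * t ^ (-(1 / 2 : ℝ)) := by gcongr; linarith

theorem integral_mul_log_of_nonneg {a b : ℝ} (ha : 0 ≤ a) (hab : a ≤ b) :
    ∫ x in a..b, x * log x =
      (b ^ 2 / 2 * log b - b ^ 2 / 4) - (a ^ 2 / 2 * log a - a ^ 2 / 4) := by
  refine intervalIntegral.integral_eq_sub_of_hasDerivAt_of_le
    (f := fun x => x ^ 2 / 2 * log x - x ^ 2 / 4) hab ?_ (fun x hx => ?_)
    (continuous_mul_log.intervalIntegrable _ _)
  · have : Continuous fun x : ℝ => x / 2 * (x * log x) - x ^ 2 / 4 := by fun_prop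
    exact (this.congr fun x => by ring).continuousOn
  · have hx : x ≠ 0 := (ha.trans_lt hx.1).ne'
    convert (((hasDerivAt_pow 2 x).div_const 2).fun_mul (hasDerivAt_log hx)).fun_sub
      ((hasDerivAt_pow 2 x).div_const 4) using 1
    field_simp
    ring

theorem integral_mul_log_max {ρ R : ℝ} (hρ : 0 ≤ ρ) (hρR : ρ ≤ R) :
    ∫ r in 0..R, r * log (max r ρ) = R ^ 2 / 2 * log R + (ρ ^ 2 - R ^ 2) / 4 := by
  have h₁ : EqOn (fun r => r * log (max r ρ)) (fun r => r * log ρ) (uIcc 0 ρ) := fun r hr => by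
    rw [uIcc_of_le hρ] at hr; dsimp only; rw [max_eq_right hr.2]
  have h₂ : EqOn (fun r => r * log (max r ρ)) (fun r => r * log r) (uIcc ρ R) := fun r hr => by
    rw [uIcc_of_le hρR] at hr; dsimp only; rw [max_eq_left hr.1]
  rw [← intervalIntegral.integral_add_adjacent_intervals
      ((continuous_mul_const _).continuousOn.congr h₁).intervalIntegrable
      (continuous_mul_log.continuousOn.congr h₂).intervalIntegrable,
    intervalIntegral.integral_congr h₁, intervalIntegral.integral_congr h₂,
    intervalIntegral.integral_mul_const, integral_id, integral_mul_log_of_nonneg hρ hρR]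
  ring

section LogIntegrable

variable {E : Type*} [NormedAddCommGroup E] [NormedSpace ℝ E] [FiniteDimensional ℝ E]
  [MeasurableSpace E] [BorelSpace E] (μ : Measure E) [μ.IsAddHaarMeasure]

theorem integrableOn_log_norm_ball (hE : 1 ≤ Module.finrank ℝ E) (R : ℝ) :
    IntegrableOn (fun x => log ‖x‖) (ball 0 R) μ :=
  integrableOn_ball_of_norm_le_rpow hE (C := 2 * (1 + R)) (α := 1 / 2)
    (lt_of_lt_of_le (by norm_num) (Nat.one_le_cast.mpr hE))
    (ae_restrict_of_forall_mem measurableSet_ball fun x hx => by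
      rw [norm_eq_abs]
      exact abs_log_le_mul_rpow_neg_half (norm_nonneg x) (mem_ball_zero_iff.mp hx).le)
    (measurable_log.comp measurable_norm).aestronglyMeasurable

theorem integrableOn_log_norm_sub (hE : 1 ≤ Module.finrank ℝ E) (a : E) {s : Set E}
    (hs : Bornology.IsBounded s) : IntegrableOn (fun x => log ‖x - a‖) s μ := by
  obtain ⟨R, hsR⟩ := hs.subset_ball a
  have h := ((measurePreserving_sub_right μ a).integrableOn_comp_preimage
    (MeasurableEquiv.subRight a).measurableEmbedding).mpr (integrableOn_log_norm_ball μ hE R)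
  rw [show (· - a) ⁻¹' ball 0 R = ball a R by ext x; simp [dist_eq_norm]] at h
  exact h.mono_set hsR

end LogIntegrable

theorem circleAverage_log_norm_sub_const_eq_log_max {a : ℂ} {r : ℝ} (hr : 0 ≤ r) :
    circleAverage (log ‖· - a‖) 0 r = log (max r ‖a‖) := by
  rcases hr.eq_or_lt with rfl | hr
  · simp
  rw [circleAverage_log_norm_sub_const_eq_log_radius_add_posLog hr.ne', zero_sub, norm_neg]
  rcases le_or_gt ‖a‖ r with ha | ha
  · rw [max_eq_left ha, (posLog_eq_zero_iff _).mpr, add_zero]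
    rw [abs_of_nonneg (by positivity)]
    exact inv_mul_le_one_of_le₀ ha hr.le
  · have h1 : 1 ≤ r⁻¹ * ‖a‖ := (one_le_inv_mul₀ hr).mpr ha.le
    rw [max_eq_right ha.le, posLog_eq_log (h1.trans (le_abs_self _)),
      log_mul (inv_ne_zero hr.ne') (hr.trans ha).ne', log_inv]
    ring

theorem circleAverage_id (c : ℂ) (r : ℝ) : circleAverage (fun z : ℂ => z) c r = c :=
  differentiable_id.diffContOnCl.circleAverage

theorem circleAverage_norm_sub_const_sq (a : ℂ) (r : ℝ) :
    circleAverage (fun z => ‖z - a‖ ^ 2) 0 r = r ^ 2 + ‖a‖ ^ 2 := by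
  set L : ℂ →L[ℝ] ℝ := (2 : ℝ) • innerSL ℝ a
  have hsphere : EqOn (fun z => ‖z - a‖ ^ 2) (fun z => (r ^ 2 + ‖a‖ ^ 2) - L z)
      (sphere 0 |r|) := by
    intro z hz
    rw [mem_sphere_zero_iff_norm] at hz
    simp only [L, norm_sub_sq_real, hz, sq_abs, FunLike.coe_smul, Pi.smul_apply,
      innerSL_apply_apply, smul_eq_mul, real_inner_comm a]
    ring
  have hL : circleAverage L 0 r = 0 := by
    have h := L.circleAverage_comp_comm (circleIntegrable_id 0 r)
    rwa [circleAverage_id, map_zero] at h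
  rw [circleAverage_congr_sphere hsphere, circleAverage_fun_sub (circleIntegrable_const _ _ _)
    L.continuous.continuousOn.circleIntegrable', circleAverage_const, hL, sub_zero]

section PolarCoord

variable {E : Type*} [NormedAddCommGroup E] [NormedSpace ℝ E]

theorem Complex.polarCoord_symm_eq_circleMap (r θ : ℝ) :
    Complex.polarCoord.symm (r, θ) = circleMap 0 r θ := by
  simp [circleMap, Complex.exp_mul_I]

theorem integral_Ioo_neg_pi_pi_circleMap (f : ℂ → E) (c : ℂ) (r : ℝ) :
    ∫ θ in Ioo (-π) π, f (circleMap c r θ) = (2 * π) • circleAverage f c r := by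
  have hperiodic : Function.Periodic (fun θ => f (circleMap c r θ)) (2 * π) :=
    fun θ => by simp [periodic_circleMap c r θ]
  have hshift := hperiodic.intervalIntegral_add_eq (-π) 0
  rw [show -π + 2 * π = π by ring, zero_add] at hshift
  rw [← integral_Ioc_eq_integral_Ioo, ← intervalIntegral.integral_of_le (by linarith [pi_pos]),
    hshift, circleAverage_def, smul_inv_smul₀ (by positivity)]

theorem integrableOn_polarCoord_target_smul {F : ℂ → E} (hF : StronglyMeasurable F)
    (hFi : Integrable F) :
    IntegrableOn (fun p : ℝ × ℝ => p.1 • F (Complex.polarCoord.symm p)) polarCoord.target := by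
  have hsymm : Measurable Complex.polarCoord.symm :=
    Complex.measurableEquivRealProd.symm.measurable.comp continuous_polarCoord_symm.measurable
  refine ⟨(continuous_fst.stronglyMeasurable.smul
    (hF.comp_measurable hsymm)).aestronglyMeasurable, ?_⟩
  calc ∫⁻ p in polarCoord.target, ‖p.1 • F (Complex.polarCoord.symm p)‖ₑ
      = ∫⁻ p in polarCoord.target, ENNReal.ofReal p.1 • ‖F (Complex.polarCoord.symm p)‖ₑ :=
        setLIntegral_congr_fun polarCoord.open_target.measurableSet fun p hp => by
          rw [enorm_smul, Real.enorm_of_nonneg (le_of_lt hp.1)]; rfl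
    _ = ∫⁻ z, ‖F z‖ₑ := Complex.lintegral_comp_polarCoord_symm (‖F ·‖ₑ)
    _ < ⊤ := hFi.2

theorem integral_closedBall_eq_integral_circleAverage {f : ℂ → E} {R : ℝ} (hR : 0 ≤ R)
    (hf : StronglyMeasurable f) (hfi : IntegrableOn f (closedBall 0 R)) :
    ∫ z in closedBall 0 R, f z = ∫ r in 0..R, (2 * π * r) • circleAverage f 0 r := by
  set F := (closedBall (0 : ℂ) R).indicator f
  have hF : IntegrableOn (fun p : ℝ × ℝ => p.1 • F (Complex.polarCoord.symm p))
      (Ioi 0 ×ˢ Ioo (-π) π) (volume.prod volume) :=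
    integrableOn_polarCoord_target_smul (hf.indicator measurableSet_closedBall)
      ((integrable_indicator_iff measurableSet_closedBall).mpr hfi)
  have hradial : ∀ r ∈ Ioi (0 : ℝ), ∫ θ in Ioo (-π) π, r • F (Complex.polarCoord.symm (r, θ)) =
      (Ioc 0 R).indicator (fun r => (2 * π * r) • circleAverage f 0 r) r := by
    intro r hr
    simp only [Complex.polarCoord_symm_eq_circleMap]
    by_cases hrR : r ≤ R
    · have hmem : ∀ θ, circleMap 0 r θ ∈ closedBall (0 : ℂ) R := fun θ => by
        simpa [abs_of_pos (mem_Ioi.mp hr)] using hrR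
      simp only [F, indicator_of_mem (hmem _), indicator_of_mem (mem_Ioc.mpr ⟨hr, hrR⟩),
        integral_smul, integral_Ioo_neg_pi_pi_circleMap, smul_smul]
      ring_nf
    · have hnmem : ∀ θ, circleMap 0 r θ ∉ closedBall (0 : ℂ) R := fun θ => by
        simpa [abs_of_pos (mem_Ioi.mp hr)] using hrR
      simp [F, indicator_of_notMem (hnmem _), indicator_of_notMem (fun h : r ∈ Ioc 0 R => hrR h.2)]
  calc ∫ z in closedBall 0 R, f z = ∫ z, F z := (integral_indicator measurableSet_closedBall).symm
    _ = ∫ p in Ioi 0 ×ˢ Ioo (-π) π, p.1 • F (Complex.polarCoord.symm p) ∂(volume.prod volume) :=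
        (Complex.integral_comp_polarCoord_symm F).symm
    _ = ∫ r in Ioi 0, ∫ θ in Ioo (-π) π, r • F (Complex.polarCoord.symm (r, θ)) :=
        setIntegral_prod _ hF
    _ = ∫ r in Ioi 0, (Ioc 0 R).indicator (fun r => (2 * π * r) • circleAverage f 0 r) r :=
        setIntegral_congr_fun measurableSet_Ioi hradial
    _ = ∫ r in 0..R, (2 * π * r) • circleAverage f 0 r := by
        rw [setIntegral_indicator measurableSet_Ioc,
          inter_eq_self_of_subset_right Ioc_subset_Ioi_self, intervalIntegral.integral_of_le hR]

end PolarCoord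

theorem Complex.volume_real_closedBall (a : ℂ) {R : ℝ} (hR : 0 ≤ R) :
    volume.real (closedBall a R) = π * R ^ 2 := by
  simp only [Measure.real, Complex.volume_closedBall, ENNReal.toReal_mul, ENNReal.toReal_pow,
    ENNReal.toReal_ofReal hR, ENNReal.coe_toReal, NNReal.coe_real_pi]
  ring

theorem integral_closedBall_log_norm_sub {a : ℂ} {R : ℝ} (ha : ‖a‖ ≤ R) :
    ∫ z in closedBall 0 R, log ‖z - a‖ = π * R ^ 2 * log R + π * (‖a‖ ^ 2 - R ^ 2) / 2 := by
  have hR : 0 ≤ R := (norm_nonneg a).trans ha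
  have hmeas : StronglyMeasurable fun z : ℂ => log ‖z - a‖ := by
    apply Measurable.stronglyMeasurable; fun_prop
  rw [integral_closedBall_eq_integral_circleAverage hR hmeas
    (integrableOn_log_norm_sub volume (by simp) a isBounded_closedBall)]
  calc ∫ r in 0..R, (2 * π * r) • circleAverage (log ‖· - a‖) 0 r
      = ∫ r in 0..R, 2 * π * (r * log (max r ‖a‖)) :=
        intervalIntegral.integral_congr fun r hr => by
          rw [uIcc_of_le hR] at hr
          simp only [circleAverage_log_norm_sub_const_eq_log_max hr.1, smul_eq_mul]
          ring
    _ = _ := by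
        rw [intervalIntegral.integral_const_mul, integral_mul_log_max (norm_nonneg a) ha]
        ring

theorem integral_closedBall_norm_sub_sq (a : ℂ) {R : ℝ} (hR : 0 ≤ R) :
    ∫ z in closedBall 0 R, ‖z - a‖ ^ 2 = π * R ^ 4 / 2 + π * R ^ 2 * ‖a‖ ^ 2 := by
  have hcont : Continuous fun z : ℂ => ‖z - a‖ ^ 2 := by fun_prop
  rw [integral_closedBall_eq_integral_circleAverage hR hcont.stronglyMeasurable
      (hcont.continuousOn.integrableOn_compact (isCompact_closedBall 0 R)),
    intervalIntegral.integral_congr (g := fun r => 2 * π * r ^ 3 + 2 * π * ‖a‖ ^ 2 * r)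
      fun r _ => by simp only [circleAverage_norm_sub_const_sq, smul_eq_mul]; ring,
    intervalIntegral.integral_add
      ((by fun_prop : Continuous fun r : ℝ => 2 * π * r ^ 3).intervalIntegrable _ _)
      ((continuous_const_mul _).intervalIntegrable _ _),
    intervalIntegral.integral_const_mul, intervalIntegral.integral_const_mul, integral_pow,
    integral_id]
  ring

theorem integral_closedBall_const_add_mul_norm_sub_sq (c d : ℝ) (a : ℂ) {R : ℝ} (hR : 0 ≤ R) :
    ∫ z in closedBall 0 R, (c + d * ‖z - a‖ ^ 2) =
      π * R ^ 2 * c + d * (π * R ^ 4 / 2 + π * R ^ 2 * ‖a‖ ^ 2) := by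
  have hconst : IntegrableOn (fun _ : ℂ => c) (closedBall 0 R) :=
    integrableOn_const measure_closedBall_lt_top.ne
  have hsq : IntegrableOn (fun z : ℂ => d * ‖z - a‖ ^ 2) (closedBall 0 R) :=
    (by fun_prop : Continuous fun z : ℂ => d * ‖z - a‖ ^ 2).continuousOn.integrableOn_compact
      (isCompact_closedBall 0 R)
  rw [integral_add hconst hsq, integral_const_mul, integral_closedBall_norm_sub_sq a hR,
    setIntegral_const, Complex.volume_real_closedBall 0 hR, smul_eq_mul]

theorem integral_closedBall_log_norm_add_mul {w : ℂ} {k R : ℝ} (hk : 0 < k) (hw : ‖w‖ ≤ k * R) :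
    ∫ z in closedBall 0 R, log ‖w + k * z‖ =
      π * R ^ 2 * log k + π * R ^ 2 * log R + π * (‖w‖ ^ 2 / k ^ 2 - R ^ 2) / 2 := by
  set a : ℂ := -(w / k)
  have hk' : (k : ℂ) ≠ 0 := Complex.ofReal_ne_zero.mpr hk.ne'
  have ha : ‖a‖ = ‖w‖ / k := by simp [a, abs_of_pos hk]
  have haR : ‖a‖ ≤ R := by rw [ha, div_le_iff₀ hk, mul_comm]; exact hw
  have hR : 0 ≤ R := (norm_nonneg a).trans haR
  have hfactor : ∀ z, z ≠ a → log ‖w + k * z‖ = log k + log ‖z - a‖ := fun z hz => by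
    rw [show w + k * z = k * (z - a) by rw [mul_sub, mul_neg, mul_div_cancel₀ w hk']; ring,
      norm_mul, Complex.norm_real, norm_of_nonneg hk.le,
      log_mul hk.ne' (norm_ne_zero_iff.mpr (sub_ne_zero.mpr hz))]
  have hconst : IntegrableOn (fun _ : ℂ => log k) (closedBall 0 R) :=
    integrableOn_const measure_closedBall_lt_top.ne
  rw [integral_congr_ae (ae_restrict_of_ae ((Measure.ae_ne volume a).mono hfactor)),
    integral_add hconst (integrableOn_log_norm_sub volume (by simp) a isBounded_closedBall),
    setIntegral_const, integral_closedBall_log_norm_sub haR, ha,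
    Complex.volume_real_closedBall 0 hR, smul_eq_mul, div_pow]
  ring

theorem unitDisk_eq_closedBall : unitDisk = closedBall 0 1 := by
  ext z
  simp [unitDisk]

theorem arealMahler_Qk_of_four_le (k : ℝ) (hk : 4 ≤ k) :
    arealMahlerQk k = 9 / (8 * k ^ 2) - 1 / 2 + Real.log k := by
  have hk0 : 0 < k := by linarith
  have hnorm_add_one : ∀ x ∈ closedBall (0 : ℂ) 1, ‖x + 1‖ ≤ 2 := fun x hx => by
    linarith [norm_add_le x 1, mem_closedBall_zero_iff.mp hx, norm_one (α := ℂ)]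
  have hinner : ∀ x ∈ closedBall (0 : ℂ) 1, ∀ y ∈ closedBall (0 : ℂ) 1,
      ∫ z in closedBall 0 1, log ‖(x + 1) * (y + 1) + k * z‖ =
        (π * log k - π / 2) + π * ‖x + 1‖ ^ 2 / (2 * k ^ 2) * ‖y - -1‖ ^ 2 := by
    intro x hx y hy
    have hw : ‖(x + 1) * (y + 1)‖ ≤ k * 1 := by
      rw [norm_mul, mul_one]
      nlinarith [hnorm_add_one x hx, hnorm_add_one y hy, norm_nonneg (x + 1), norm_nonneg (y + 1)]
    rw [integral_closedBall_log_norm_add_mul hk0 hw, norm_mul, sub_neg_eq_add, log_one]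
    field_simp
    ring
  have hmiddle : ∀ x ∈ closedBall (0 : ℂ) 1,
      ∫ y in closedBall 0 1, ∫ z in closedBall 0 1, log ‖(x + 1) * (y + 1) + k * z‖ =
        (π ^ 2 * log k - π ^ 2 / 2) + 3 * π ^ 2 / (4 * k ^ 2) * ‖x - -1‖ ^ 2 := by
    intro x hx
    rw [setIntegral_congr_fun measurableSet_closedBall (hinner x hx),
      integral_closedBall_const_add_mul_norm_sub_sq _ _ _ zero_le_one, sub_neg_eq_add, norm_neg,
      norm_one]
    ring
  rw [arealMahlerQk, unitDisk_eq_closedBall,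
    setIntegral_congr_fun measurableSet_closedBall hmiddle,
    integral_closedBall_const_add_mul_norm_sub_sq _ _ _ zero_le_one, norm_neg, norm_one]
  field_simp
  ring
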